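/- Let (B,d) be a graded commutative dg-division ring of characteristic different from 2. Then ker(d) is concentrated in even degrees, i.e. every nonzero homogeneous element of ker(d) has even degree. -/

import Mathlib

open scoped TensorProduct

section DGCore

variable {A : Type} [Ring A] {B : Type} [Ring B]

/-- `(A, d)` together with the grading `𝒜` is a differential graded ring:
`d` is a square-zero additive endomorphism of degree `1` satisfying the graded
Leibniz rule. -/
structure IsDGRing (𝒜 : ℤ → AddSubgroup A) (d : A →+ A) : Prop where
  d_sq : ∀ x, d (d x) = 0
  d_mem : ∀ (i : ℤ), ∀ x ∈ 𝒜 i, d x ∈ 𝒜 (i + 1)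
  leibniz : ∀ (i : ℤ) (a b : A), a ∈ 𝒜 i →
    d (a * b) = d a * b + ((Int.negOnePow i : ℤ)) • (a * d b)

/-- A homomorphism of differential graded rings (a dg-extension). -/
structure IsDGHom (𝒜 : ℤ → AddSubgroup A) (dA : A →+ A)
    (𝒝 : ℤ → AddSubgroup B) (dB : B →+ B) (φ : A →+* B) : Prop where
  map_mem : ∀ (i : ℤ), ∀ x ∈ 𝒜 i, φ x ∈ 𝒝 i
  map_d : ∀ x, φ (dA x) = dB (φ x)

/-- Graded commutativity: `a * b = (-1)^{|a||b|} b * a` for homogeneous elements. -/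
def IsGradedComm (𝒜 : ℤ → AddSubgroup A) : Prop :=
  ∀ (i j : ℤ) (a b : A), a ∈ 𝒜 i → b ∈ 𝒜 j →
    a * b = ((Int.negOnePow (i * j) : ℤ)) • (b * a)

/-- A dg-ring is acyclic if its homology vanishes, i.e. every cycle is a boundary. -/
def IsAcyclic (d : A →+ A) : Prop := ∀ x, d x = 0 → ∃ y, d y = x

/-- A dg left ideal: a graded additive subgroup closed under the differential and
under left multiplication. -/
def IsDGLeftIdeal (𝒜 : ℤ → AddSubgroup A) [GradedRing 𝒜] (d : A →+ A)
    (I : AddSubgroup A) : Prop :=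
  (∀ (a : A), ∀ x ∈ I, a * x ∈ I) ∧ (∀ x ∈ I, d x ∈ I) ∧
    (∀ x ∈ I, ∀ i : ℤ, (DirectSum.decompose 𝒜 x i : A) ∈ I)

/-- A dg right ideal. -/
def IsDGRightIdeal (𝒜 : ℤ → AddSubgroup A) [GradedRing 𝒜] (d : A →+ A)
    (I : AddSubgroup A) : Prop :=
  (∀ (a : A), ∀ x ∈ I, x * a ∈ I) ∧ (∀ x ∈ I, d x ∈ I) ∧
    (∀ x ∈ I, ∀ i : ℤ, (DirectSum.decompose 𝒜 x i : A) ∈ I)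

/-- A dg-division ring: the only dg left ideals and the only dg right ideals
are `0` and the whole ring. -/
def IsDGDivisionRing (𝒜 : ℤ → AddSubgroup A) [GradedRing 𝒜] (d : A →+ A) : Prop :=
  (0 : A) ≠ 1 ∧ (∀ I, IsDGLeftIdeal 𝒜 d I → I = ⊥ ∨ I = ⊤) ∧
    (∀ I, IsDGRightIdeal 𝒜 d I → I = ⊥ ∨ I = ⊤)

/-- A graded division ring (gr-field): every nonzero homogeneous element is invertible. -/
def IsGradedDivisionRing (𝒜 : ℤ → AddSubgroup A) : Prop :=
  (0 : A) ≠ 1 ∧ ∀ (i : ℤ) (x : A), x ∈ 𝒜 i → x ≠ 0 → IsUnit x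

/-- The relations defining `B ⊗[A] B` inside `B ⊗[ℤ] B`, for an extension `φ : A →+* B`. -/
def sepRel (φ : A →+* B) : Submodule ℤ (B ⊗[ℤ] B) :=
  Submodule.span ℤ {x | ∃ (b b' : B) (a : A),
    x = (b * φ a) ⊗ₜ[ℤ] b' - b ⊗ₜ[ℤ] (φ a * b')}

/-- The balanced tensor product `B ⊗[A] B` for an extension `φ : A →+* B`. -/
abbrev SepTensor (φ : A →+* B) := (B ⊗[ℤ] B) ⧸ sepRel φ

/-- The canonical projection `B ⊗[ℤ] B → B ⊗[A] B`. -/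
noncomputable def sepMk (φ : A →+* B) : B ⊗[ℤ] B →ₗ[ℤ] SepTensor φ := (sepRel φ).mkQ

/-- The multiplication map `μ : B ⊗[A] B → B`. -/
noncomputable def sepMul (φ : A →+* B) : SepTensor φ →ₗ[ℤ] B :=
  Submodule.liftQ _ (TensorProduct.lift (LinearMap.mul ℤ B)) (by
    rw [sepRel, Submodule.span_le]
    rintro x ⟨b, b', a, rfl⟩
    simp [SetLike.mem_coe, LinearMap.mem_ker, mul_assoc]
    erw [LinearMap.mem_ker, LinearMap.map_sub, TensorProduct.lift.tmul, TensorProduct.lift.tmul]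
    simp [mul_assoc])

/-- Left multiplication by `b` on `B ⊗[A] B`. -/
noncomputable def sepLMul (φ : A →+* B) (b : B) : SepTensor φ →ₗ[ℤ] SepTensor φ :=
  Submodule.mapQ _ _ (TensorProduct.map (LinearMap.mulLeft ℤ b) LinearMap.id) (by
    rw [sepRel, Submodule.span_le]
    rintro x ⟨b₀, b', a, rfl⟩
    simp only [SetLike.mem_coe, Submodule.mem_comap, map_sub, TensorProduct.map_tmul,
      LinearMap.mulLeft_apply, LinearMap.id_apply]
    exact Submodule.subset_span ⟨b * b₀, b', a, by
      erw [LinearMap.map_sub, TensorProduct.map_tmul, TensorProduct.map_tmul]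
      simp [mul_assoc]⟩)

/-- Right multiplication by `b` on `B ⊗[A] B`. -/
noncomputable def sepRMul (φ : A →+* B) (b : B) : SepTensor φ →ₗ[ℤ] SepTensor φ :=
  Submodule.mapQ _ _ (TensorProduct.map LinearMap.id (LinearMap.mulRight ℤ b)) (by
    rw [sepRel, Submodule.span_le]
    rintro x ⟨b₀, b', a, rfl⟩
    simp only [SetLike.mem_coe, Submodule.mem_comap, map_sub, TensorProduct.map_tmul,
      LinearMap.mulRight_apply, LinearMap.id_apply]
    exact Submodule.subset_span ⟨b₀, b' * b, a, by
      erw [LinearMap.map_sub, TensorProduct.map_tmul, TensorProduct.map_tmul]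
      simp [mul_assoc]⟩)

/-- The grading on `B ⊗[A] B`: the degree `n` part is generated by the classes of
`b ⊗ b'` with `b, b'` homogeneous of degrees summing to `n`. -/
noncomputable def sepGrading (φ : A →+* B) (𝒝 : ℤ → AddSubgroup B) (n : ℤ) :
    AddSubgroup (SepTensor φ) :=
  AddSubgroup.closure {x | ∃ (i j : ℤ) (b b' : B), b ∈ 𝒝 i ∧ b' ∈ 𝒝 j ∧ i + j = n ∧
    x = sepMk φ (b ⊗ₜ[ℤ] b')}

/-- The sign involution `b ↦ (-1)^{|b|} b` of a graded ring. -/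
noncomputable def signMap (𝒝 : ℤ → AddSubgroup B) [GradedRing 𝒝] : B →+ B :=
  (DirectSum.toAddMonoid fun i =>
      (smulAddHom ℤ B ((Int.negOnePow i : ℤ))).comp (𝒝 i).subtype).comp
    (DirectSum.decomposeAddEquiv 𝒝).toAddMonoidHom

lemma signMap_of_mem (𝒝 : ℤ → AddSubgroup B) [GradedRing 𝒝] {i : ℤ} {x : B}
    (hx : x ∈ 𝒝 i) : signMap 𝒝 x = ((Int.negOnePow i : ℤ)) • x := by
  classical
  unfold signMap
  simp only [AddMonoidHom.comp_apply, AddEquiv.coe_toAddMonoidHom,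
    DirectSum.decomposeAddEquiv_apply, DirectSum.decompose_of_mem 𝒝 hx,
    DirectSum.toAddMonoid_of]
  rfl

/-- The differential `d ⊗ 1 + ε ⊗ d` on `B ⊗[ℤ] B` (with Koszul sign). -/
noncomputable def sepDiffPre (𝒝 : ℤ → AddSubgroup B) [GradedRing 𝒝] (dB : B →+ B) :
    B ⊗[ℤ] B →ₗ[ℤ] B ⊗[ℤ] B :=
  TensorProduct.map dB.toIntLinearMap LinearMap.id +
    TensorProduct.map (signMap 𝒝).toIntLinearMap dB.toIntLinearMap

/-- `D` is the differential induced on `B ⊗[A] B` by `d_B ⊗ 1 + ε ⊗ d_B`. -/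
def IsSepDiff (φ : A →+* B) (𝒝 : ℤ → AddSubgroup B) [GradedRing 𝒝] (dB : B →+ B)
    (D : SepTensor φ →+ SepTensor φ) : Prop :=
  ∀ x : B ⊗[ℤ] B, D (sepMk φ x) = sepMk φ (sepDiffPre 𝒝 dB x)

/-- `ρ : B → B ⊗[A] B` is a `B`-`B`-bimodule section of the multiplication map. -/
def IsSepSection (φ : A →+* B) (ρ : B →+ SepTensor φ) : Prop :=
  (∀ b, sepMul φ (ρ b) = b) ∧
    (∀ (b₁ c b₂ : B), ρ (b₁ * c * b₂) = sepLMul φ b₁ (sepRMul φ b₂ (ρ c)))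

/-- The extension `φ : A →+* B` is separable: the multiplication map
`B ⊗[A] B → B` splits as a bimodule map. -/
def IsSeparableExt (φ : A →+* B) : Prop := ∃ ρ : B →+ SepTensor φ, IsSepSection φ ρ

/-- The extension `φ : A →+* B` of graded rings is graded-separable: the multiplication
map `B ⊗[A] B → B` splits as a map of graded bimodules. -/
def IsGrSeparable (φ : A →+* B) (𝒝 : ℤ → AddSubgroup B) : Prop :=
  ∃ ρ : B →+ SepTensor φ, IsSepSection φ ρ ∧
    ∀ (n : ℤ), ∀ b ∈ 𝒝 n, ρ b ∈ sepGrading φ 𝒝 n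

/-- The dg-extension `φ : (A,d_A) →  (B,d_B)` is dg-separable: the multiplication map
`B ⊗[A] B → B` splits as a map of differential graded bimodules. -/
def IsDGSeparable (φ : A →+* B) (𝒝 : ℤ → AddSubgroup B) [GradedRing 𝒝]
    (dB : B →+ B) : Prop :=
  ∃ D : SepTensor φ →+ SepTensor φ, IsSepDiff φ 𝒝 dB D ∧
    ∃ ρ : B →+ SepTensor φ, IsSepSection φ ρ ∧
      (∀ (n : ℤ), ∀ b ∈ 𝒝 n, ρ b ∈ sepGrading φ 𝒝 n) ∧
      (∀ b, D (ρ b) = ρ (dB b))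

end DGCore

/-! A nonzero homogeneous cycle `x` generates the dg right ideal `x B`, which must then be all
of `B`, so `x` has a right inverse `z`. If `x` had odd degree, graded commutativity would give
`x² = -x²`, and multiplying by the right inverse `z²` of `x²` would give `1 = -1`. -/

theorem two_eq_zero_of_eq_neg_of_mul_eq_one {R : Type*} [Ring R] {a b : R} (hab : a * b = 1)
    (ha : a = -a) : (2 : R) = 0 :=
  calc (2 : R) = 2 * (a * b) := by rw [hab, mul_one]
    _ = (a + a) * b := by rw [two_mul, add_mul]
    _ = 0 := by rw [eq_neg_iff_add_eq_zero.mp ha, zero_mul]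

theorem IsGradedComm.mul_self_eq_neg {B : Type} [Ring B] {𝒝 : ℤ → AddSubgroup B}
    (hcomm : IsGradedComm 𝒝) {i : ℤ} {x : B} (hx : x ∈ 𝒝 i) (hi : Odd i) :
    x * x = -(x * x) := by
  simpa [(Int.negOnePow_eq_neg_one_iff _).2 (hi.mul hi)] using hcomm i i x x hx hx

section CyclesEvenDegree

variable {B : Type} [Ring B] {𝒝 : ℤ → AddSubgroup B} [GradedRing 𝒝] {dB : B →+ B}

theorem isDGRightIdeal_range_mulLeft (hB : IsDGRing 𝒝 dB) {i : ℤ} {x : B} (hx : x ∈ 𝒝 i)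
    (hdx : dB x = 0) : IsDGRightIdeal 𝒝 dB (AddMonoidHom.mulLeft x).range := by
  refine ⟨?_, ?_, ?_⟩
  · rintro a _ ⟨b, rfl⟩
    exact ⟨b * a, (mul_assoc x b a).symm⟩
  · rintro _ ⟨a, rfl⟩
    refine ⟨(Int.negOnePow i : ℤ) • dB a, ?_⟩
    simp only [AddMonoidHom.coe_mulLeft, hB.leibniz i x a hx, hdx, zero_mul, zero_add,
      mul_smul_comm]
  · rintro _ ⟨a, rfl⟩ n
    refine ⟨DirectSum.decompose 𝒝 a (n - i), ?_⟩
    have h := DirectSum.coe_decompose_mul_add_of_left_mem 𝒝 (j := n - i) (b := a) hx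
    rw [add_sub_cancel] at h
    exact h.symm

theorem IsDGDivisionRing.exists_mul_eq_one (hB : IsDGRing 𝒝 dB) (hdiv : IsDGDivisionRing 𝒝 dB)
    {i : ℤ} {x : B} (hx : x ∈ 𝒝 i) (hdx : dB x = 0) (hne : x ≠ 0) : ∃ z, x * z = 1 := by
  have hxI : x ∈ (AddMonoidHom.mulLeft x).range := ⟨1, mul_one x⟩
  rcases hdiv.2.2 _ (isDGRightIdeal_range_mulLeft hB hx hdx) with h | h
  · exact absurd (AddSubgroup.mem_bot.mp (h ▸ hxI)) hne
  · exact (h ▸ AddSubgroup.mem_top 1 : (1 : B) ∈ (AddMonoidHom.mulLeft x).range)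

end CyclesEvenDegree

/-- In a graded commutative dg-division ring of characteristic
different from `2`, every nonzero homogeneous cycle has even degree. -/
theorem cycles_concentrated_in_even_degrees
    {B : Type} [Ring B] (𝒝 : ℤ → AddSubgroup B) [GradedRing 𝒝] (dB : B →+ B)
    (hB : IsDGRing 𝒝 dB) (hcomm : IsGradedComm 𝒝) (hdiv : IsDGDivisionRing 𝒝 dB)
    (hchar : (2 : B) ≠ 0) :
    ∀ (i : ℤ) (x : B), x ∈ 𝒝 i → dB x = 0 → x ≠ 0 → Even i := by
  intro i x hx hdx hne
  by_contra hodd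
  obtain ⟨z, hxz⟩ := hdiv.exists_mul_eq_one hB hx hdx hne
  have hxxzz : x * x * (z * z) = 1 := by rw [mul_assoc, ← mul_assoc x z z, hxz, one_mul, hxz]
  exact hchar <| two_eq_zero_of_eq_neg_of_mul_eq_one hxxzz <|
    hcomm.mul_self_eq_neg hx (Int.not_even_iff_odd.mp hodd)
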